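/- Suppose |T_r| = 1 for some r ≥ 0, and let X be a nonempty substring of T (i.e., X = T[x..x+|X|) for some x, with |X| ≥ 1). Then |X̄_k| ≤ k holds for every k ≥ max(r,1); consequently, the set {k ≥ 0 : |X̄_k| > k} is nonempty (it contains 0), bounded above, and its maximum ℓ satisfies ℓ < max(r,1). -/

import Mathlib

namespace IPM

/-- The universal alphabet `𝒜`: least fixed point of `𝒜 = Σ ∪ (𝒜 × 𝒜) ∪ (𝒜 × ℤ_{≥2})`. -/
inductive UA (α : Type) where
  | sym  : α → UA α
  | pair : UA α → UA α → UA α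
  | pow  : UA α → {m : ℕ // 2 ≤ m} → UA α
  deriving DecidableEq

variable {α : Type} [DecidableEq α]

/-- Expansion of a single symbol of the universal alphabet. -/
def expand : UA α → List α
  | .sym c => [c]
  | .pair b c => expand b ++ expand c
  | .pow b m => (List.replicate m.1 (expand b)).flatten

/-- Expansion of a string of symbols (homomorphic extension). -/
def expandStr (T : List (UA α)) : List α := (T.map expand).flatten

/-- Decomposition of a string into blocks: a block boundary is placed between
adjacent symbols `a` and `b` unless `glue a b` holds. -/
def chunks {γ : Type} (glue : γ → γ → Bool) : List γ → List (List γ)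
  | [] => []
  | [a] => [[a]]
  | a :: b :: rest =>
    match chunks glue (b :: rest) with
    | [] => [[a]]
    | blk :: G => if glue a b then (a :: blk) :: G else [a] :: blk :: G

/-- Collapse a block: a length-1 block stays, a power block `A^m` (m ≥ 2) becomes the
symbol `(A, m)`, and a length-2 block `BC` with `B ≠ C` becomes the symbol `(B, C)`. -/
def collapse : List (UA α) → List (UA α)
  | [] => []
  | [a] => [a]
  | a :: b :: rest =>
    if (b :: rest).all (fun x => decide (x = a)) then
      [.pow a ⟨rest.length + 2, by omega⟩]
    else [.pair a b]

/-- Shrinking with respect to a glue relation: decompose into blocks and collapse them. -/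
def shrinkWith (glue : UA α → UA α → Bool) (T : List (UA α)) : List (UA α) :=
  ((chunks glue T).map collapse).flatten

/-- In the `rle_B`-decomposition, no boundary is placed between `a` and `b` iff `a = b ∈ B`. -/
def rleGlue (B : Set (UA α)) [DecidablePred (· ∈ B)] : UA α → UA α → Bool :=
  fun a b => decide (a = b ∧ a ∈ B)

/-- In the `pc_{L,R}`-decomposition, no boundary is placed between `a` and `b`
iff `a ∈ L` and `b ∈ R`. -/
def pcGlue (L R : Set (UA α)) [DecidablePred (· ∈ L)] [DecidablePred (· ∈ R)] :
    UA α → UA α → Bool :=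
  fun a b => decide (a ∈ L ∧ b ∈ R)

/-- Restricted run-length encoding `rle_B`. -/
def rleC (B : Set (UA α)) [DecidablePred (· ∈ B)] (T : List (UA α)) : List (UA α) :=
  shrinkWith (rleGlue B) T

/-- Restricted pair compression `pc_{L,R}`. -/
def pcC (L R : Set (UA α)) [DecidablePred (· ∈ L)] [DecidablePred (· ∈ R)]
    (T : List (UA α)) : List (UA α) :=
  shrinkWith (pcGlue L R) T


section Recompression

variable (Bs Ls Rs : ℕ → Set (UA α))
variable [∀ k, DecidablePred (· ∈ Bs k)] [∀ k, DecidablePred (· ∈ Ls k)]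
variable [∀ k, DecidablePred (· ∈ Rs k)]

/-- The glue relation of `shrink_k`: run-length encoding `rle_{ℬ_k}` for odd `k`,
pair compression `pc_{ℒ_k,ℛ_k}` for even `k`. -/
def glueK (k : ℕ) : UA α → UA α → Bool :=
  if k % 2 = 1 then rleGlue (Bs k) else pcGlue (Ls k) (Rs k)

/-- `shrink_k`: `rle_{ℬ_k}` for odd `k`, `pc_{ℒ_k,ℛ_k}` for even `k`. -/
def shrinkK (k : ℕ) (T : List (UA α)) : List (UA α) :=
  shrinkWith (glueK Bs Ls Rs k) T

/-- The restricted recompression sequence: `T_0 = T`, `T_k = shrink_k(T_{k-1})`. -/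
def Tseq (T : List α) : ℕ → List (UA α)
  | 0 => T.map .sym
  | k + 1 => shrinkK Bs Ls Rs (k + 1) (Tseq T k)

/-- Whether a string consists of copies of a single symbol. -/
def isUniform : List (UA α) → Bool
  | [] => true
  | a :: rest => rest.all (fun x => decide (x = a))

/-- The leftmost block of the `glue`-decomposition of `T`, or `ε` if there are no
blocks or that block consists of two distinct symbols. -/
def leftBlock (glue : UA α → UA α → Bool) (T : List (UA α)) : List (UA α) :=
  match chunks glue T with
  | [] => []
  | blk :: _ => if isUniform blk then blk else []

/-- The rightmost block of the `glue`-decomposition of `T`, or `ε` if there is at most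
one block or that block consists of two distinct symbols. -/
def rightBlock (glue : UA α → UA α → Bool) (T : List (UA α)) : List (UA α) :=
  let G := chunks glue T
  if G.length ≤ 1 then []
  else
    let blk := G.getLastD []
    if isUniform blk then blk else []

/-- The popped-sequence strings `X̄_k`: `X̄_0 = X` and
`X̄_{k+1} = shrink_{k+1}(X̄'_k)` where `X̄_k = L_k ⬝ X̄'_k ⬝ R_k`. -/
def Xbar (X : List α) : ℕ → List (UA α)
  | 0 => X.map .sym
  | k + 1 =>
    let Xb := Xbar X k
    let L := leftBlock (glueK Bs Ls Rs (k + 1)) Xb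
    let R := rightBlock (glueK Bs Ls Rs (k + 1)) Xb
    shrinkK Bs Ls Rs (k + 1) ((Xb.drop L.length).take (Xb.length - L.length - R.length))

/-- The popped-sequence block `L_k`. -/
def Lblk (X : List α) (k : ℕ) : List (UA α) :=
  leftBlock (glueK Bs Ls Rs (k + 1)) (Xbar Bs Ls Rs X k)

/-- The popped-sequence block `R_k`. -/
def Rblk (X : List α) (k : ℕ) : List (UA α) :=
  rightBlock (glueK Bs Ls Rs (k + 1)) (Xbar Bs Ls Rs X k)

end Recompression

section ChunkLemmas

variable {γ : Type} (g : γ → γ → Bool)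

lemma chunks_ne_nil : ∀ (T : List γ), T ≠ [] → chunks g T ≠ []
  | [], h => absurd rfl h
  | [a], _ => by simp [chunks]
  | a :: b :: rest, _ => by
    have := chunks_ne_nil (b :: rest) (by simp)
    simp only [chunks]
    rcases hG : chunks g (b :: rest) with _ | ⟨blk, G⟩
    · simp
    · by_cases hg : g a b <;> simp [hg]

lemma chunks_cons_cons (a b : γ) (rest : List γ) :
    chunks g (a :: b :: rest) =
      if g a b then ((a :: (chunks g (b :: rest)).headD []) :: (chunks g (b :: rest)).tail)
      else [a] :: chunks g (b :: rest) := by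
  have hne := chunks_ne_nil g (b :: rest) (by simp)
  rcases hG : chunks g (b :: rest) with _ | ⟨blk, G⟩
  · exact absurd hG hne
  · simp only [chunks, hG]
    by_cases hg : g a b <;> simp [hg]

lemma mem_chunks_ne_nil : ∀ (T : List γ) (c : List γ), c ∈ chunks g T → c ≠ []
  | [], c, h => by simp [chunks] at h
  | [a], c, h => by simp [chunks] at h; simp [h]
  | a :: b :: rest, c, h => by
    have hne := chunks_ne_nil g (b :: rest) (by simp)
    rcases hG : chunks g (b :: rest) with _ | ⟨blk, G⟩
    · exact absurd hG hne
    · simp only [chunks, hG] at h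
      by_cases hg : g a b <;> simp [hg] at h
      · rcases h with h | h
        · simp [h]
        · exact mem_chunks_ne_nil (b :: rest) c (by rw [hG]; exact List.mem_cons_of_mem _ h)
      · rcases h with h | h | h
        · simp [h]
        · exact mem_chunks_ne_nil (b :: rest) c (by rw [hG, h]; exact List.mem_cons_self)
        · exact mem_chunks_ne_nil (b :: rest) c (by rw [hG]; exact List.mem_cons_of_mem _ h)

lemma chunks_flatten : ∀ (T : List γ), (chunks g T).flatten = T
  | [] => by simp [chunks]
  | [a] => by simp [chunks]
  | a :: b :: rest => by
    have ih := chunks_flatten (b :: rest)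
    have hne := chunks_ne_nil g (b :: rest) (by simp)
    rcases hG : chunks g (b :: rest) with _ | ⟨blk, G⟩
    · exact absurd hG hne
    · rw [hG] at ih
      simp only [chunks, hG]
      by_cases hg : g a b <;> simp [hg] <;> simp_all

lemma chunks_head? : ∀ (T : List γ) (c : List γ) (cs : List (List γ)),
    chunks g T = c :: cs → c.head? = T.head?
  | [], c, cs, h => by simp [chunks] at h
  | [a], c, cs, h => by simp [chunks] at h; simp [h.1]
  | a :: b :: rest, c, cs, h => by
    have hne := chunks_ne_nil g (b :: rest) (by simp)
    rcases hG : chunks g (b :: rest) with _ | ⟨blk, G⟩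
    · exact absurd hG hne
    · simp only [chunks, hG] at h
      by_cases hg : g a b <;> simp [hg] at h <;> simp [← h.1]

lemma chunks_chain' : ∀ (T : List γ) (c : List γ), c ∈ chunks g T →
    c.Chain' (fun x y => g x y = true)
  | [], c, h => by simp [chunks] at h
  | [a], c, h => by simp [chunks] at h; simp [h, List.Chain', List.isChain_singleton]
  | a :: b :: rest, c, h => by
    have hne := chunks_ne_nil g (b :: rest) (by simp)
    rcases hG : chunks g (b :: rest) with _ | ⟨blk, G⟩
    · exact absurd hG hne
    · have hblk : blk.head? = some b := by
        have := chunks_head? g (b :: rest) blk G hG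
        simpa using this
      simp only [chunks, hG] at h
      by_cases hg : g a b <;> simp [hg] at h
      · rcases h with h | h
        · subst h
          have hchain := chunks_chain' (b :: rest) blk (by rw [hG]; exact List.mem_cons_self)
          rcases blk with _ | ⟨b', t⟩
          · simp at hblk
          · simp at hblk; subst hblk
            exact List.isChain_cons_cons.mpr ⟨hg, hchain⟩
        · exact chunks_chain' (b :: rest) c (by rw [hG]; exact List.mem_cons_of_mem _ h)
      · rcases h with h | h | h
        · simp [h, List.Chain', List.isChain_singleton]
        · exact chunks_chain' (b :: rest) c (by rw [hG, h]; exact List.mem_cons_self)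
        · exact chunks_chain' (b :: rest) c (by rw [hG]; exact List.mem_cons_of_mem _ h)

lemma chunks_append : ∀ (T₁ T₂ : List γ),
    (∀ p q, T₁.getLast? = some p → T₂.head? = some q → g p q = false) →
    chunks g (T₁ ++ T₂) = chunks g T₁ ++ chunks g T₂
  | [], T₂, _ => by simp [chunks]
  | [a], T₂, h => by
    rcases T₂ with _ | ⟨b, rest⟩
    · simp [chunks]
    · have hab : g a b = false := h a b (by simp) (by simp)
      rw [List.singleton_append, chunks_cons_cons, hab]
      simp [chunks]
  | a :: b :: rest, T₂, h => by
    have ih := chunks_append (b :: rest) T₂ (fun p q hp hq => h p q (by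
      rw [List.getLast?_cons_cons]; exact hp) hq)
    have hne := chunks_ne_nil g (b :: rest) (by simp)
    have hne₂ := chunks_ne_nil g (b :: rest ++ T₂) (by simp)
    rw [show (a :: b :: rest) ++ T₂ = a :: b :: (rest ++ T₂) from rfl,
      chunks_cons_cons, chunks_cons_cons]
    rw [show b :: (rest ++ T₂) = (b :: rest) ++ T₂ from rfl, ih]
    rcases hG : chunks g (b :: rest) with _ | ⟨blk, G⟩
    · exact absurd hG hne
    · by_cases hg : g a b <;> simp [hg]

lemma chunks_boundary : ∀ (T : List γ) (c : List γ) (cs : List (List γ)),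
    chunks g T = c :: cs → ∀ p q, c.getLast? = some p → cs.flatten.head? = some q →
      g p q = false
  | [], c, cs, h => by simp [chunks] at h
  | [a], c, cs, h => by
    simp [chunks] at h
    rw [h.2]; intro p q _ hq; simp at hq
  | a :: b :: rest, c, cs, h => by
    have hne := chunks_ne_nil g (b :: rest) (by simp)
    rcases hG : chunks g (b :: rest) with _ | ⟨blk, G⟩
    · exact absurd hG hne
    · have hblkne : blk ≠ [] := mem_chunks_ne_nil g (b :: rest) blk
        (by rw [hG]; exact List.mem_cons_self)
      have ihb := chunks_boundary (b :: rest) blk G hG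
      simp only [chunks, hG] at h
      by_cases hg : g a b <;> simp [hg] at h
      · obtain ⟨h1, h2⟩ := h
        subst h1; subst h2
        intro p q hp hq
        have hx : blk.getLast?.isSome := List.getLast?_isSome.mpr hblkne
        obtain ⟨x, hx⟩ := Option.isSome_iff_exists.mp hx
        refine ihb p q ?_ hq
        rw [hx]
        rw [List.getLast?_cons, hx] at hp
        simpa using hp
      · obtain ⟨h1, h2⟩ := h
        subst h1; subst h2
        intro p q hp hq
        simp at hp; subst hp
        have hb : blk.head? = some b := by simpa using chunks_head? g (b :: rest) blk G hG
        rcases blk with _ | ⟨b', t⟩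
        · exact absurd rfl hblkne
        · simp at hb; subst hb
          simp at hq
          rw [← hq]
          simpa using hg

end ChunkLemmas
section ChunkLemmas2

variable {γ : Type} (g : γ → γ → Bool)

lemma getLast?_cons_of_ne_nil {a : γ} {l : List γ} (h : l ≠ []) :
    (a :: l).getLast? = l.getLast? := by
  rcases l with _ | ⟨b, t⟩
  · exact absurd rfl h
  · exact List.getLast?_cons_cons

lemma chunks_split_boundary : ∀ (T : List γ) (C₁ C₂ : List (List γ)),
    chunks g T = C₁ ++ C₂ → C₁ ≠ [] → C₂ ≠ [] →
    ∀ p q, C₁.flatten.getLast? = some p → C₂.flatten.head? = some q → g p q = false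
  | [], C₁, C₂, h, h₁, h₂ => by
    simp [chunks] at h
    rcases C₁ with _ | _
    · exact absurd rfl h₁
    · simp at h
  | [a], C₁, C₂, h, h₁, h₂ => by
    simp only [chunks] at h
    rcases C₁ with _ | ⟨c₀, C₁'⟩
    · exact absurd rfl h₁
    rcases C₂ with _ | ⟨c₂, C₂'⟩
    · exact absurd rfl h₂
    · intro p q _ _
      have := congrArg List.length h
      simp at this
  | a :: b :: rest, C₁, C₂, h, h₁, h₂ => by
    have hne := chunks_ne_nil g (b :: rest) (by simp)
    rcases hG : chunks g (b :: rest) with _ | ⟨blk, G⟩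
    · exact absurd hG hne
    · have hblkne : blk ≠ [] := mem_chunks_ne_nil g (b :: rest) blk
        (by rw [hG]; exact List.mem_cons_self)
      have hb : blk.head? = some b := by simpa using chunks_head? g (b :: rest) blk G hG
      simp only [chunks, hG] at h
      rcases C₁ with _ | ⟨c₀, C₁'⟩
      · exact absurd rfl h₁
      intro p q hp hq
      by_cases hg : g a b <;> simp [hg] at h
      · -- chunks T = (a :: blk) :: G,  c₀ = a :: blk,  G = C₁' ++ C₂
        obtain ⟨hc₀, hrest⟩ := h
        have ih := chunks_split_boundary (b :: rest) (blk :: C₁') C₂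
          (by rw [hG, hrest]; rfl) (by simp) h₂
        refine ih p q ?_ hq
        rw [← hc₀] at hp
        have hflat : (blk :: C₁').flatten ≠ [] := by
          simp only [List.flatten_cons]
          intro hcontra
          exact hblkne (List.append_eq_nil_iff.mp hcontra).1
        rw [List.flatten_cons]
        rw [List.flatten_cons, List.cons_append, getLast?_cons_of_ne_nil
          (by simpa [List.flatten_cons] using hflat)] at hp
        exact hp
      · -- chunks T = [a] :: blk :: G,  c₀ = [a],  blk :: G = C₁' ++ C₂
        obtain ⟨hc₀, hrest⟩ := h
        rcases C₁' with _ | ⟨c₁, C₁''⟩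
        · -- C₂ = blk :: G
          simp only [List.nil_append] at hrest
          subst hc₀
          simp at hp
          subst hp
          rw [← hrest] at hq
          rcases blk with _ | ⟨b', t⟩
          · exact absurd rfl hblkne
          · simp at hb; subst hb
            simp at hq
            rw [← hq]
            simpa using hg
        · -- C₁ = [a] :: c₁ :: C₁''
          have ih := chunks_split_boundary (b :: rest) (c₁ :: C₁'') C₂
            (by rw [hG, hrest]) (by simp) h₂
          refine ih p q ?_ hq
          have hc₁ne : c₁ ≠ [] := by
            refine mem_chunks_ne_nil g (b :: rest) c₁ ?_
            rw [hG, hrest]; exact List.mem_cons_self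
          have hflat : (c₁ :: C₁'').flatten ≠ [] := by
            simp only [List.flatten_cons]
            intro hcontra
            exact hc₁ne (List.append_eq_nil_iff.mp hcontra).1
          rw [← hc₀] at hp
          rw [show ([a] :: c₁ :: C₁'').flatten = a :: (c₁ :: C₁'').flatten from by simp,
            getLast?_cons_of_ne_nil hflat] at hp
          exact hp

lemma chunks_length_le : ∀ (T : List γ), (chunks g T).length ≤ T.length
  | [] => by simp [chunks]
  | [a] => by simp [chunks]
  | a :: b :: rest => by
    have ih := chunks_length_le (b :: rest)
    have hne := chunks_ne_nil g (b :: rest) (by simp)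
    rcases hG : chunks g (b :: rest) with _ | ⟨blk, G⟩
    · exact absurd hG hne
    · rw [hG] at ih
      simp only [chunks, hG]
      by_cases hg : g a b <;> simp [hg] <;> simp at ih <;> omega

end ChunkLemmas2
section ShrinkLemmas

variable {α : Type} [DecidableEq α]

lemma collapse_length_le (c : List (UA α)) : (collapse c).length ≤ 1 := by
  rcases c with _ | ⟨a, _ | ⟨b, rest⟩⟩ <;> simp [collapse]
  split <;> simp

lemma flatten_map_collapse_length : ∀ (C : List (List (UA α))),
    ((C.map collapse).flatten).length ≤ C.length
  | [] => by simp
  | c :: C => by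
    have := flatten_map_collapse_length C
    have := collapse_length_le c
    simp only [List.map_cons, List.flatten_cons, List.length_append, List.length_cons]
    omega

lemma shrinkWith_length_le (g : UA α → UA α → Bool) (T : List (UA α)) :
    (shrinkWith g T).length ≤ T.length :=
  le_trans (flatten_map_collapse_length _) (chunks_length_le g T)

lemma shrinkWith_append (g : UA α → UA α → Bool) (T₁ T₂ : List (UA α))
    (h : ∀ p q, T₁.getLast? = some p → T₂.head? = some q → g p q = false) :
    shrinkWith g (T₁ ++ T₂) = shrinkWith g T₁ ++ shrinkWith g T₂ := by
  unfold shrinkWith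
  rw [chunks_append g T₁ T₂ h, List.map_append, List.flatten_append]

lemma uniform_of_chain_eq : ∀ (c : List (UA α)),
    c.Chain' (fun x y => x = y) → isUniform c = true
  | [] , _ => rfl
  | [a], _ => by simp [isUniform]
  | a :: b :: t, h => by
    simp only [List.Chain', List.isChain_cons_cons] at h
    obtain ⟨rfl, h2⟩ := h
    have := uniform_of_chain_eq (a :: t) h2
    simp [isUniform] at this ⊢
    exact this

lemma glueK_shape (Bs Ls Rs : ℕ → Set (UA α))
    [∀ k, DecidablePred (· ∈ Bs k)] [∀ k, DecidablePred (· ∈ Ls k)]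
    [∀ k, DecidablePred (· ∈ Rs k)]
    (k : ℕ) (hd : k % 2 = 0 → Disjoint (Ls k) (Rs k))
    (T c : List (UA α)) (hc : c ∈ chunks (glueK Bs Ls Rs k) T) :
    isUniform c = true ∨ ∃ a b, c = [a, b] ∧
      (∀ p, glueK Bs Ls Rs k p a = false) ∧ (∀ q, glueK Bs Ls Rs k b q = false) := by
  have hchain := chunks_chain' _ T c hc
  by_cases hk : k % 2 = 1
  · left
    refine uniform_of_chain_eq c (hchain.imp ?_)
    intro x y hxy
    simp only [glueK, hk, if_pos] at hxy
    simp [rleGlue] at hxy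
    exact hxy.1
  · have hk0 : k % 2 = 0 := by omega
    have hdisj := hd hk0
    have hgl : glueK Bs Ls Rs k = pcGlue (Ls k) (Rs k) := by
      simp [glueK, hk]
    rcases c with _ | ⟨a, _ | ⟨b, t⟩⟩
    · left; rfl
    · left; simp [isUniform]
    · right
      simp only [List.Chain', List.isChain_cons_cons] at hchain
      obtain ⟨hab, h2⟩ := hchain
      rw [hgl] at hab
      simp [pcGlue] at hab
      obtain ⟨haL, hbR⟩ := hab
      have hbL : b ∉ Ls k := fun hb => (Set.disjoint_left.mp hdisj hb) hbR
      have haR : a ∉ Rs k := fun ha => (Set.disjoint_left.mp hdisj haL) ha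
      have ht : t = [] := by
        rcases t with _ | ⟨z, t'⟩
        · rfl
        · simp only [List.Chain', List.isChain_cons_cons] at h2
          rw [hgl] at h2
          simp [pcGlue] at h2
          exact absurd h2.1.1 hbL
      subst ht
      refine ⟨a, b, rfl, ?_, ?_⟩
      · intro p; rw [hgl]; simp [pcGlue]; intro _; exact haR
      · intro q; rw [hgl]; simp [pcGlue]; intro h; exact absurd h hbL

end ShrinkLemmas
section PopLemma

variable {α : Type} [DecidableEq α]

lemma head?_append_left {γ : Type} {l₁ : List γ} (l₂ : List γ) (h : l₁ ≠ []) :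
    (l₁ ++ l₂).head? = l₁.head? := by
  rcases l₁ with _ | ⟨a, t⟩
  · exact absurd rfl h
  · rfl

lemma getLast?_append_right {γ : Type} (l₁ : List γ) {l₂ : List γ} (h : l₂ ≠ []) :
    (l₁ ++ l₂).getLast? = l₂.getLast? := by
  induction l₁ with
  | nil => rfl
  | cons a t ih =>
    rw [List.cons_append, getLast?_cons_of_ne_nil (by simp [h]), ih]

lemma split_core (g : UA α → UA α → Bool) (U V L M R : List (UA α)) (hM : M ≠ [])
    (cond1 : ∀ p q, (U ++ L).getLast? = some p → M.head? = some q → g p q = false)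
    (cond2 : ∀ p q, M.getLast? = some p → (R ++ V).head? = some q → g p q = false) :
    shrinkWith g (U ++ (L ++ M ++ R) ++ V) =
      shrinkWith g (U ++ L) ++ shrinkWith g M ++ shrinkWith g (R ++ V) := by
  have e : U ++ (L ++ M ++ R) ++ V = (U ++ L) ++ (M ++ (R ++ V)) := by simp
  rw [e, shrinkWith_append g (U ++ L) (M ++ (R ++ V))
      (fun p q hp hq => cond1 p q hp (by rwa [head?_append_left _ hM] at hq)),
    shrinkWith_append g M (R ++ V) cond2, List.append_assoc]

lemma shrinkWith_nil (g : UA α → UA α → Bool) : shrinkWith g [] = [] := rfl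

lemma pop_shrink_factor (g : UA α → UA α → Bool) (U Xb V : List (UA α))
    (hshape : ∀ c, c ∈ chunks g Xb → isUniform c = true ∨ ∃ a b, c = [a, b] ∧
      (∀ p, g p a = false) ∧ (∀ q, g b q = false)) :
    ∃ U' V', shrinkWith g (U ++ Xb ++ V) =
      U' ++ shrinkWith g ((Xb.drop (leftBlock g Xb).length).take
            (Xb.length - (leftBlock g Xb).length - (rightBlock g Xb).length)) ++ V' := by
  set M := (Xb.drop (leftBlock g Xb).length).take
      (Xb.length - (leftBlock g Xb).length - (rightBlock g Xb).length) with hMdef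
  by_cases hM : M = []
  · exact ⟨shrinkWith g (U ++ Xb ++ V), [], by rw [hM, shrinkWith_nil]; simp⟩
  have hXbne : Xb ≠ [] := by
    intro h; apply hM; rw [hMdef, h]; simp
  rcases hG : chunks g Xb with _ | ⟨c₀, cs⟩
  · exact absurd hG (chunks_ne_nil g Xb hXbne)
  have hc₀ne : c₀ ≠ [] := mem_chunks_ne_nil g Xb c₀ (by rw [hG]; exact List.mem_cons_self)
  have hflat : c₀ ++ cs.flatten = Xb := by
    have := chunks_flatten g Xb; rw [hG] at this; simpa using this
  have hLdef : leftBlock g Xb = if isUniform c₀ then c₀ else [] := by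
    simp [leftBlock, hG]
  rcases List.eq_nil_or_concat cs with hcs | ⟨cs', c_end, hcs⟩
  · -- single chunk
    subst hcs
    simp only [List.flatten_nil, List.append_nil] at hflat
    have hRdef : rightBlock g Xb = [] := by
      simp [rightBlock, hG]
    by_cases hu : isUniform c₀
    · -- L = whole chunk, M = [] : contradiction
      exfalso; apply hM
      rw [hMdef, hLdef, if_pos hu, hflat]
      simp
    · -- L = [], M = Xb = c₀ non-uniform
      have hMeq : M = Xb := by
        rw [hMdef, hLdef, if_neg hu, hRdef]
        simp
      rcases hshape c₀ (by rw [hG]; exact List.mem_cons_self) with h | ⟨a, b, hab, hpa, hbq⟩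
      · exact absurd h hu
      have hXbab : Xb = [a, b] := by rw [← hflat, hab]
      have key := split_core g U V [] M [] hM
        (fun p q hp hq => by
          rw [hMeq, hXbab] at hq; simp at hq; rw [← hq]; exact hpa p)
        (fun p q hp hq => by
          rw [hMeq, hXbab] at hp; simp at hp; rw [← hp]; exact hbq q)
      refine ⟨shrinkWith g (U ++ []), shrinkWith g ([] ++ V), ?_⟩
      rw [← key, hMeq]; simp
  · -- at least two chunks
    subst hcs
    simp only [List.concat_eq_append] at hG hflat
    have hcene : c_end ≠ [] := mem_chunks_ne_nil g Xb c_end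
      (by rw [hG]; simp)
    have hflat2 : Xb = c₀ ++ cs'.flatten ++ c_end := by
      rw [← hflat]; simp
    have hRdef : rightBlock g Xb = if isUniform c_end then c_end else [] := by
      have hlast : (chunks g Xb).getLastD [] = c_end := by
        have h2 : (c₀ :: (cs' ++ [c_end])).getLast? = some c_end := by
          rw [getLast?_cons_of_ne_nil (by simp), List.getLast?_concat]
        rw [hG, List.getLastD_eq_getLast?, h2]; rfl
      have hlen : ¬ (chunks g Xb).length ≤ 1 := by
        rw [hG]; simp
      simp only [rightBlock, hlast, if_neg hlen]
    -- boundary conditions from chunk structure, reusable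
    have bdryL : ∀ p q, c₀.getLast? = some p → (cs'.flatten ++ c_end).head? = some q →
        g p q = false := by
      intro p q hp hq
      refine chunks_split_boundary g Xb [c₀] (cs' ++ [c_end]) (by rw [hG]; rfl)
        (by simp) (by simp) p q (by simpa using hp) ?_
      simpa using hq
    have bdryR : ∀ p q, (c₀ ++ cs'.flatten).getLast? = some p → c_end.head? = some q →
        g p q = false := by
      intro p q hp hq
      refine chunks_split_boundary g Xb (c₀ :: cs') [c_end] (by rw [hG]; rfl)
        (by simp) (by simp) p q (by simpa using hp) (by simpa using hq)
    by_cases huL : isUniform c₀ <;> by_cases huR : isUniform c_end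
    · -- L = c₀, R = c_end, M = cs'.flatten
      have hMeq : M = cs'.flatten := by
        rw [hMdef, hLdef, if_pos huL, hRdef, if_pos huR, hflat2]
        rw [List.append_assoc, List.drop_left]
        have : (c₀ ++ (cs'.flatten ++ c_end)).length - c₀.length - c_end.length
            = cs'.flatten.length := by
          simp only [List.length_append]; omega
        rw [this, List.take_left]
      have key := split_core g U V c₀ M c_end hM
        (fun p q hp hq => by
          rw [getLast?_append_right U hc₀ne] at hp
          refine bdryL p q hp ?_
          rw [hMeq] at hq
          rwa [head?_append_left _ (by rw [← hMeq]; exact hM)]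
        )
        (fun p q hp hq => by
          rw [head?_append_left _ hcene] at hq
          refine bdryR p q ?_ hq
          rw [hMeq] at hp
          rwa [getLast?_append_right c₀ (by rw [← hMeq]; exact hM)])
      refine ⟨shrinkWith g (U ++ c₀), shrinkWith g (c_end ++ V), ?_⟩
      rw [← key, hflat2, hMeq]
    · -- L = c₀, R = [], M = cs'.flatten ++ c_end
      rcases hshape c_end (by rw [hG]; simp) with h | ⟨a, b, hab, hpa, hbq⟩
      · exact absurd h huR
      have hMeq : M = cs'.flatten ++ c_end := by
        rw [hMdef, hLdef, if_pos huL, hRdef, if_neg huR, hflat2]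
        rw [List.append_assoc, List.drop_left]
        have : (c₀ ++ (cs'.flatten ++ c_end)).length - c₀.length - List.length ([] : List (UA α))
            = (cs'.flatten ++ c_end).length := by
          simp only [List.length_append, List.length_nil]; omega
        rw [this, List.take_length]
      have key := split_core g U V c₀ M [] hM
        (fun p q hp hq => by
          rw [getLast?_append_right U hc₀ne] at hp
          rw [hMeq] at hq
          exact bdryL p q hp hq)
        (fun p q hp hq => by
          rw [hMeq, getLast?_append_right cs'.flatten hcene, hab] at hp
          simp at hp; rw [← hp]; exact hbq q)
      refine ⟨shrinkWith g (U ++ c₀), shrinkWith g ([] ++ V), ?_⟩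
      rw [← key, hflat2, hMeq]
      all_goals simp
    · -- L = [], R = c_end, M = c₀ ++ cs'.flatten
      rcases hshape c₀ (by rw [hG]; exact List.mem_cons_self) with h | ⟨a, b, hab, hpa, hbq⟩
      · exact absurd h huL
      have hMeq : M = c₀ ++ cs'.flatten := by
        rw [hMdef, hLdef, if_neg huL, hRdef, if_pos huR, hflat2]
        have : (c₀ ++ cs'.flatten ++ c_end).length - List.length ([] : List (UA α)) - c_end.length
            = (c₀ ++ cs'.flatten).length := by
          simp only [List.length_append, List.length_nil]; omega
        rw [this]
        show List.take _ (List.drop 0 _) = _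
        rw [List.drop_zero, List.take_left]
      have key := split_core g U V [] M c_end hM
        (fun p q hp hq => by
          rw [hMeq, head?_append_left _ hc₀ne, hab] at hq
          simp at hq; rw [← hq]; exact hpa p)
        (fun p q hp hq => by
          rw [head?_append_left _ hcene] at hq
          rw [hMeq] at hp
          exact bdryR p q hp hq)
      refine ⟨shrinkWith g (U ++ []), shrinkWith g (c_end ++ V), ?_⟩
      rw [← key, hflat2, hMeq]
      all_goals simp
    · -- L = [], R = [], M = Xb
      rcases hshape c₀ (by rw [hG]; exact List.mem_cons_self) with h | ⟨a, b, hab, hpa, hbq⟩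
      · exact absurd h huL
      rcases hshape c_end (by rw [hG]; simp) with h | ⟨a', b', hab', hpa', hbq'⟩
      · exact absurd h huR
      have hMeq : M = Xb := by
        rw [hMdef, hLdef, if_neg huL, hRdef, if_neg huR]
        simp
      have key := split_core g U V [] M [] hM
        (fun p q hp hq => by
          rw [hMeq, hflat2, head?_append_left _ (by simp [hc₀ne]),
            head?_append_left _ hc₀ne, hab] at hq
          simp at hq; rw [← hq]; exact hpa p)
        (fun p q hp hq => by
          rw [hMeq, hflat2, getLast?_append_right _ hcene, hab'] at hp
          simp at hp; rw [← hp]; exact hbq' q)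
      refine ⟨shrinkWith g (U ++ []), shrinkWith g ([] ++ V), ?_⟩
      rw [← key, hMeq]
      all_goals simp

end PopLemma
section MainAux

variable {α : Type} [DecidableEq α]
variable (Bs Ls Rs : ℕ → Set (UA α))
variable [∀ k, DecidablePred (· ∈ Bs k)] [∀ k, DecidablePred (· ∈ Ls k)]
variable [∀ k, DecidablePred (· ∈ Rs k)]

lemma Xbar_factor (hdisj : ∀ k, k % 2 = 0 → Disjoint (Ls k) (Rs k))
    (T X : List α) (x : ℕ)
    (hx : (T.drop x).take X.length = X) (k : ℕ) :
    ∃ U V, Tseq Bs Ls Rs T k = U ++ Xbar Bs Ls Rs X k ++ V := by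
  induction k with
  | zero =>
    refine ⟨(T.take x).map .sym, ((T.drop x).drop X.length).map .sym, ?_⟩
    have hT : T = T.take x ++ (X ++ (T.drop x).drop X.length) := by
      conv_lhs => rw [← List.take_append_drop x T]
      congr 1
      conv_lhs => rw [← List.take_append_drop X.length (T.drop x)]
      rw [hx]
    show T.map UA.sym = _
    conv_lhs => rw [hT]
    simp [Xbar]
  | succ k ih =>
    obtain ⟨U, V, hUV⟩ := ih
    obtain ⟨U', V', hsplit⟩ := pop_shrink_factor (glueK Bs Ls Rs (k + 1)) U
      (Xbar Bs Ls Rs X k) V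
      (fun c hc => glueK_shape Bs Ls Rs (k + 1) (hdisj (k + 1)) _ c hc)
    refine ⟨U', V', ?_⟩
    show shrinkK Bs Ls Rs (k + 1) (Tseq Bs Ls Rs T k) = _
    rw [hUV]
    exact hsplit

lemma Tseq_length_le_one (T : List α) (r : ℕ)
    (hr : (Tseq Bs Ls Rs T r).length = 1) :
    ∀ k, r ≤ k → (Tseq Bs Ls Rs T k).length ≤ 1 := by
  intro k hk
  induction k, hk using Nat.le_induction with
  | base => omega
  | succ k hk ih =>
    calc (Tseq Bs Ls Rs T (k + 1)).length
        ≤ (Tseq Bs Ls Rs T k).length := shrinkWith_length_le _ _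
      _ ≤ 1 := ih

end MainAux
/-- Suppose `|T_r| = 1` for some `r ≥ 0` and let `X` be a nonempty
substring of `T`. Then `|X̄_k| ≤ k` for every `k ≥ max(r,1)`; consequently the set
`{k ≥ 0 : |X̄_k| > k}` is nonempty (it contains `0`), bounded above, and its maximum
`ℓ` satisfies `ℓ < max(r,1)`. -/
theorem proxy_level_exists (Bs Ls Rs : ℕ → Set (UA α))
    [∀ k, DecidablePred (· ∈ Bs k)] [∀ k, DecidablePred (· ∈ Ls k)]
    [∀ k, DecidablePred (· ∈ Rs k)]
    (hdisj : ∀ k, k % 2 = 0 → Disjoint (Ls k) (Rs k))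
    (T : List α) (r : ℕ) (hr : (Tseq Bs Ls Rs T r).length = 1)
    (X : List α) (hX : X ≠ []) (x : ℕ)
    (hsub : x + X.length ≤ T.length ∧ (T.drop x).take X.length = X) :
    (∀ k, max r 1 ≤ k → (Xbar Bs Ls Rs X k).length ≤ k) ∧
    0 ∈ {k : ℕ | k < (Xbar Bs Ls Rs X k).length} ∧
    BddAbove {k : ℕ | k < (Xbar Bs Ls Rs X k).length} ∧
    (∀ l : ℕ, IsGreatest {k : ℕ | k < (Xbar Bs Ls Rs X k).length} l → l < max r 1) := by
  have part1 : ∀ k, max r 1 ≤ k → (Xbar Bs Ls Rs X k).length ≤ k := by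
    intro k hk
    obtain ⟨U, V, hUV⟩ := Xbar_factor Bs Ls Rs hdisj T X x hsub.2 k
    have h1 : (Xbar Bs Ls Rs X k).length ≤ (Tseq Bs Ls Rs T k).length := by
      rw [hUV]; simp; omega
    have h2 : (Tseq Bs Ls Rs T k).length ≤ 1 :=
      Tseq_length_le_one Bs Ls Rs T r hr k (le_trans (le_max_left r 1) hk)
    have h3 : 1 ≤ k := le_trans (le_max_right r 1) hk
    omega
  refine ⟨part1, ?_, ?_, ?_⟩
  · show 0 < (Xbar Bs Ls Rs X 0).length
    show 0 < (X.map UA.sym).length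
    simpa using List.length_pos_iff.mpr hX
  · refine ⟨max r 1, fun k hk => ?_⟩
    simp only [Set.mem_setOf_eq] at hk
    by_contra hcon
    push_neg at hcon
    have := part1 k (le_of_lt hcon)
    omega
  · intro l hl
    have hmem := hl.1
    simp only [Set.mem_setOf_eq] at hmem
    by_contra hcon
    push_neg at hcon
    have := part1 l hcon
    omega

end IPM
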